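/- arXiv:2206.08207 — 4 statements merged into one kernel-verified Lean document; each statement's English description precedes it below -/
import Mathlib

section
/- Let 𝐊 be an invertible symmetric real m×m matrix, 𝐇 an invertible symmetric real n×n matrix, y₁ ∈ ℝ^m, y₂ ∈ ℝ^n. Set U = 𝐊y₁, W = 𝐇y₂, K = ½·y₁ᵀU, H = ½·y₂ᵀW. Let f, f_K, f_H, f_KK, f_KH, f_HH be real numbers satisfying f_K·K + f_H·H = f, f_KK·K + f_KH·H = 0, f_KH·K + f_HH·H = 0, with f_K ≠ 0 and f_K + 2K·f_KK ≠ 0. Set A = f_K·𝐊 + f_KK·UUᵀ, B = f_KH·UWᵀ, C = f_KH·WUᵀ, D = f_H·𝐇 + f_HH·WWᵀ. Then A is invertible with A⁻¹ = (1/f_K)·(𝐊⁻¹ − (f_KK/(f_K + 2K·f_KK))·y₁y₁ᵀ), the Schur complement satisfies D − C·A⁻¹·B = f_H·𝐇 + (f_K·f_HH/(f_K + 2K·f_KK))·WWᵀ, and moreover f_H·(f_K + 2K·f_KK) + 2H·f_K·f_HH = f_K·f_H − 2f·f_KH. -/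
/-!
`A` is a rank-one update of `f_K • 𝐊` along `U = 𝐊 y₁`, so the Sherman–Morrison formula gives its
inverse. Moreover `A y₁ = (f_K + 2K f_KK) U`, hence `A⁻¹ U = y₁ / (f_K + 2K f_KK)` and
`C A⁻¹ B = f_KH² · 2K / (f_K + 2K f_KK) · W Wᵀ`. The Euler relations give `K f_KK f_HH = K f_KH²`,
which turns `f_HH − 2K f_KH² / (f_K + 2K f_KK)` into `f_K f_HH / (f_K + 2K f_KK)`; the last identity
is a linear combination of the Euler relations.
-/

open Matrix

namespace Matrix

section CommSemiring

variable {l m n R : Type*} [Fintype m] [CommSemiring R]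

theorem vecMulVec_mul_mul_vecMulVec (u : l → R) (v w : m → R) (N : Matrix m m R) (x : n → R) :
    vecMulVec u v * N * vecMulVec w x = (v ⬝ᵥ N *ᵥ w) • vecMulVec u x := by
  rw [vecMulVec_mul, vecMulVec_mul_vecMulVec, dotProduct_mulVec, vecMulVec_smul]

theorem smul_add_smul_vecMulVec_mulVec (M : Matrix m m R) (y : m → R) (a b : R) :
    (a • M + b • vecMulVec (M *ᵥ y) (y ᵥ* M)) *ᵥ y = (a + b * (y ⬝ᵥ M *ᵥ y)) • (M *ᵥ y) := by
  rw [add_mulVec, smul_mulVec, smul_mulVec, vecMulVec_mulVec, op_smul_eq_smul, smul_smul,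
    ← dotProduct_mulVec, add_smul]

end CommSemiring

variable {ι 𝕜 : Type*} [Fintype ι] [DecidableEq ι] [Field 𝕜]

-- Sherman–Morrison, for an update along `M *ᵥ y`.
theorem smul_add_smul_vecMulVec_mul_eq_one {M : Matrix ι ι 𝕜} (hM : IsUnit M) (y : ι → 𝕜)
    {a b : 𝕜} (ha : a ≠ 0) (hden : a + b * (y ⬝ᵥ M *ᵥ y) ≠ 0) :
    (a • M + b • vecMulVec (M *ᵥ y) (y ᵥ* M)) *
      (a⁻¹ • (M⁻¹ - (b / (a + b * (y ⬝ᵥ M *ᵥ y))) • vecMulVec y y)) = 1 := by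
  have hMinv : M * M⁻¹ = 1 := mul_nonsing_inv M ((isUnit_iff_isUnit_det M).mp hM)
  have hyM : y ᵥ* M ᵥ* M⁻¹ = y := by rw [vecMul_vecMul, hMinv, vecMul_one]
  simp only [Matrix.mul_smul, Matrix.mul_sub, add_mul, Matrix.smul_mul, hMinv, mul_vecMulVec,
    vecMulVec_mul, hyM, vecMulVec_mulVec, op_smul_eq_smul, smul_mulVec, smul_vecMulVec,
    ← dotProduct_mulVec]
  match_scalars
  · field_simp
  · field_simp
    ring

theorem inv_smul_add_smul_vecMulVec_mulVec_mulVec {M : Matrix ι ι 𝕜} (hM : IsUnit M)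
    (y : ι → 𝕜) {a b : 𝕜} (ha : a ≠ 0) (hden : a + b * (y ⬝ᵥ M *ᵥ y) ≠ 0) :
    (a • M + b • vecMulVec (M *ᵥ y) (y ᵥ* M))⁻¹ *ᵥ (M *ᵥ y) =
      (a + b * (y ⬝ᵥ M *ᵥ y))⁻¹ • y := by
  set A := a • M + b • vecMulVec (M *ᵥ y) (y ᵥ* M)
  have hA : IsUnit A.det :=
    isUnit_det_of_right_inverse (smul_add_smul_vecMulVec_mul_eq_one hM y ha hden)
  calc A⁻¹ *ᵥ (M *ᵥ y) = A⁻¹ *ᵥ ((a + b * (y ⬝ᵥ M *ᵥ y))⁻¹ • A *ᵥ y) := by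
        rw [smul_add_smul_vecMulVec_mulVec, smul_smul, inv_mul_cancel₀ hden, one_smul]
    _ = (a + b * (y ⬝ᵥ M *ᵥ y))⁻¹ • y := by
        rw [mulVec_smul, mulVec_mulVec, nonsing_inv_mul A hA, one_mulVec]

end Matrix

theorem block_inverse_and_schur_complement_general {m n : ℕ}
    (Kmat : Matrix (Fin m) (Fin m) ℝ) (Hmat : Matrix (Fin n) (Fin n) ℝ)
    (hKmat : IsUnit Kmat) (hKmatsym : Kmat.IsSymm)
    (y₁ : Fin m → ℝ)
    (U : Fin m → ℝ) (W : Fin n → ℝ)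
    (hU : U = Kmat.mulVec y₁)
    (K H : ℝ) (hK : K = (1 / 2) * (y₁ ⬝ᵥ U))
    (f fK fH fKK fKH fHH : ℝ)
    (heuler1 : fK * K + fH * H = f)
    (heuler2 : fKK * K + fKH * H = 0)
    (heuler3 : fKH * K + fHH * H = 0)
    (hfK : fK ≠ 0) (hden : fK + 2 * K * fKK ≠ 0)
    (A : Matrix (Fin m) (Fin m) ℝ) (B : Matrix (Fin m) (Fin n) ℝ)
    (C : Matrix (Fin n) (Fin m) ℝ) (D : Matrix (Fin n) (Fin n) ℝ)
    (hA : A = fK • Kmat + fKK • vecMulVec U U)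
    (hB : B = fKH • vecMulVec U W)
    (hC : C = fKH • vecMulVec W U)
    (hD : D = fH • Hmat + fHH • vecMulVec W W) :
    IsUnit A ∧
    A⁻¹ = (1 / fK) • (Kmat⁻¹ - (fKK / (fK + 2 * K * fKK)) • vecMulVec y₁ y₁) ∧
    D - C * A⁻¹ * B = fH • Hmat + (fK * fHH / (fK + 2 * K * fKK)) • vecMulVec W W ∧
    fH * (fK + 2 * K * fKK) + 2 * H * fK * fHH = fK * fH - 2 * f * fKH := by
  have hUvec : y₁ ᵥ* Kmat = U := by rw [hU, ← vecMul_transpose, hKmatsym.eq]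
  have hA' : A = fK • Kmat + fKK • vecMulVec (Kmat *ᵥ y₁) (y₁ ᵥ* Kmat) := by
    rw [hA, hUvec, ← hU]
  have hden' : fK + fKK * (y₁ ⬝ᵥ Kmat *ᵥ y₁) = fK + 2 * K * fKK := by
    rw [← hU, hK]; ring
  have hden₁ : fK + fKK * (y₁ ⬝ᵥ Kmat *ᵥ y₁) ≠ 0 := by rwa [hden']
  have hAM := smul_add_smul_vecMulVec_mul_eq_one hKmat y₁ hfK hden₁
  rw [← hA', hden'] at hAM
  have hAU := inv_smul_add_smul_vecMulVec_mulVec_mulVec hKmat y₁ hfK hden₁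
  rw [← hA', hden', ← hU] at hAU
  have hquad : U ⬝ᵥ A⁻¹ *ᵥ U = 2 * K / (fK + 2 * K * fKK) := by
    rw [hAU, dotProduct_smul, smul_eq_mul, dotProduct_comm, hK]
    field_simp
  refine ⟨IsUnit.of_mul_eq_one _ hAM, by rw [inv_eq_right_inv hAM, one_div], ?_, ?_⟩
  · simp only [hD, hC, hB, Matrix.smul_mul, Matrix.mul_smul, vecMulVec_mul_mul_vecMulVec, hquad,
      smul_smul]
    rw [add_sub_assoc, ← sub_smul]
    congr 2
    have hcross : K * (fKK * fHH) = K * fKH ^ 2 := by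
      linear_combination fHH * heuler2 - fKH * heuler3
    field_simp
    linear_combination 2 * hcross
  · linear_combination 2 * fH * heuler2 + 2 * fK * heuler3 - 2 * fKH * heuler1

/-- Inverse of the first diagonal block and the Schur complement identity for the
fundamental tensor of a Minkowskian product metric. -/
theorem block_inverse_and_schur_complement {m n : ℕ}
    (Kmat : Matrix (Fin m) (Fin m) ℝ) (Hmat : Matrix (Fin n) (Fin n) ℝ)
    (hKmat : IsUnit Kmat) (hKmatsym : Kmat.IsSymm) (hHmat : IsUnit Hmat) (hHmatsym : Hmat.IsSymm)
    (y₁ : Fin m → ℝ) (y₂ : Fin n → ℝ)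
    (U : Fin m → ℝ) (W : Fin n → ℝ)
    (hU : U = Kmat.mulVec y₁) (hW : W = Hmat.mulVec y₂)
    (K H : ℝ) (hK : K = (1 / 2) * (y₁ ⬝ᵥ U)) (hH : H = (1 / 2) * (y₂ ⬝ᵥ W))
    (f fK fH fKK fKH fHH : ℝ)
    (heuler1 : fK * K + fH * H = f)
    (heuler2 : fKK * K + fKH * H = 0)
    (heuler3 : fKH * K + fHH * H = 0)
    (hfK : fK ≠ 0) (hden : fK + 2 * K * fKK ≠ 0)
    (A : Matrix (Fin m) (Fin m) ℝ) (B : Matrix (Fin m) (Fin n) ℝ)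
    (C : Matrix (Fin n) (Fin m) ℝ) (D : Matrix (Fin n) (Fin n) ℝ)
    (hA : A = fK • Kmat + fKK • vecMulVec U U)
    (hB : B = fKH • vecMulVec U W)
    (hC : C = fKH • vecMulVec W U)
    (hD : D = fH • Hmat + fHH • vecMulVec W W) :
    IsUnit A ∧
    A⁻¹ = (1 / fK) • (Kmat⁻¹ - (fKK / (fK + 2 * K * fKK)) • vecMulVec y₁ y₁) ∧
    D - C * A⁻¹ * B = fH • Hmat + (fK * fHH / (fK + 2 * K * fKK)) • vecMulVec W W ∧
    fH * (fK + 2 * K * fKK) + 2 * H * fK * fHH = fK * fH - 2 * f * fKH :=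
  block_inverse_and_schur_complement_general Kmat Hmat hKmat hKmatsym y₁ U W hU K H hK f fK fH fKK
    fKH fHH heuler1 heuler2 heuler3 hfK hden A B C D hA hB hC hD
end

section
/- Let 𝐊 be an invertible symmetric real m×m matrix, 𝐇 an invertible symmetric real n×n matrix, y₁ ∈ ℝ^m, y₂ ∈ ℝ^n. Set U = 𝐊y₁, W = 𝐇y₂, K = ½·y₁ᵀU, H = ½·y₂ᵀW. Let f, f_K, f_H, f_KK, f_KH, f_HH be real numbers satisfying f_K·K + f_H·H = f, f_KK·K + f_KH·H = 0, f_KH·K + f_HH·H = 0, f_KH² = f_KK·f_HH, with f_K ≠ 0, f_H ≠ 0, and Δ := f_K·f_H − 2f·f_KH ≠ 0. Then the block matrix 𝐆 with blocks 𝐆₁₁ = f_K·𝐊 + f_KK·UUᵀ, 𝐆₁₂ = f_KH·UWᵀ, 𝐆₂₁ = f_KH·WUᵀ, 𝐆₂₂ = f_H·𝐇 + f_HH·WWᵀ is invertible, and its inverse is the block matrix with blocks (1/f_K)·(𝐊⁻¹ − (f_H·f_KK/Δ)·y₁y₁ᵀ), −(f_KH/Δ)·y₁y₂ᵀ, −(f_KH/Δ)·y₂y₁ᵀ,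 and (1/f_H)·(𝐇⁻¹ − (f_K·f_HH/Δ)·y₂y₂ᵀ). -/
/-!
Multiply `G` blockwise by the claimed inverse. Since `U = 𝐊 y₁` with `𝐊` symmetric,
`Uᵀ 𝐊⁻¹ = y₁ᵀ`, so each block of the product is a multiple of the identity plus a multiple of one
rank-one matrix (`U y₁ᵀ` or `U y₂ᵀ`, and symmetrically). The diagonal multiples are `1`, and the
rank-one coefficients vanish by the Euler relations together with `f_KH² = f_KK f_HH`. The second
block row is the first one with the roles of the two factors exchanged.
-/

open Matrix

namespace Matrix

section CommRing

variable {R : Type*} [CommRing R] {m n : Type*} [Fintype m]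

lemma smul_add_smul_vecMulVec_mul_vecMulVec (A : Matrix m m R) (y : m → R) (v : n → R) (a b : R) :
    (a • A + b • vecMulVec (A *ᵥ y) (A *ᵥ y)) * vecMulVec y v =
      (a + b * ((A *ᵥ y) ⬝ᵥ y)) • vecMulVec (A *ᵥ y) v := by
  rw [Matrix.add_mul, Matrix.smul_mul, Matrix.smul_mul, mul_vecMulVec, vecMulVec_mul_vecMulVec,
    vecMulVec_smul]
  module

variable [DecidableEq m]

lemma mulVec_vecMul_nonsing_inv_of_isSymm {A : Matrix m m R} (hA : IsUnit A) (hs : A.IsSymm)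
    (y : m → R) : (A *ᵥ y) ᵥ* A⁻¹ = y := by
  rw [← vecMul_transpose, hs.eq, vecMul_vecMul,
    mul_nonsing_inv _ ((isUnit_iff_isUnit_det A).1 hA), vecMul_one]

lemma smul_add_smul_vecMulVec_mul_nonsing_inv_sub {A : Matrix m m R} (hA : IsUnit A)
    (hs : A.IsSymm) (y : m → R) (a b c : R) :
    (a • A + b • vecMulVec (A *ᵥ y) (A *ᵥ y)) * (A⁻¹ - c • vecMulVec y y) =
      a • 1 + (b - c * (a + b * ((A *ᵥ y) ⬝ᵥ y))) • vecMulVec (A *ᵥ y) y := by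
  rw [Matrix.mul_sub, Matrix.mul_smul, smul_add_smul_vecMulVec_mul_vecMulVec, Matrix.add_mul,
    Matrix.smul_mul, Matrix.smul_mul, mul_nonsing_inv _ ((isUnit_iff_isUnit_det A).1 hA),
    vecMulVec_mul,
    mulVec_vecMul_nonsing_inv_of_isSymm hA hs]
  module

lemma vecMulVec_mulVec_mul_nonsing_inv_sub {A : Matrix m m R} (hA : IsUnit A)
    (hs : A.IsSymm) (u : n → R) (y : m → R) (c : R) :
    vecMulVec u (A *ᵥ y) * (A⁻¹ - c • vecMulVec y y) =
      (1 - c * ((A *ᵥ y) ⬝ᵥ y)) • vecMulVec u y := by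
  rw [Matrix.mul_sub, vecMulVec_mul, mulVec_vecMul_nonsing_inv_of_isSymm hA hs, Matrix.mul_smul,
    vecMulVec_mul_vecMulVec, vecMulVec_smul]
  module

end CommRing

end Matrix

/-- The relations satisfied by the value, gradient and Hessian of a 1-homogeneous `f(K, H)` at
`(K, H)`; the last one says that the Hessian is degenerate. -/
structure EulerRelations {𝕜 : Type*} [CommRing 𝕜] (K H f fK fH fKK fKH fHH : 𝕜) : Prop where
  value : fK * K + fH * H = f
  gradient_K : fKK * K + fKH * H = 0
  gradient_H : fKH * K + fHH * H = 0
  hessian_det : fKH ^ 2 = fKK * fHH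

lemma EulerRelations.swap {𝕜 : Type*} [CommRing 𝕜] {K H f fK fH fKK fKH fHH : 𝕜}
    (h : EulerRelations K H f fK fH fKK fKH fHH) : EulerRelations H K f fH fK fHH fKH fKK where
  value := by linear_combination h.value
  gradient_K := by linear_combination h.gradient_H
  gradient_H := by linear_combination h.gradient_K
  hessian_det := by linear_combination h.hessian_det

section Field

variable {𝕜 : Type*} [Field 𝕜] {m n : Type*} [Fintype m] [DecidableEq m] [Fintype n]
  [DecidableEq n]

lemma product_tensor_block_row_mul_inverse {Kmat : Matrix m m 𝕜} {Hmat : Matrix n n 𝕜}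
    (hKmat : IsUnit Kmat) (hKsym : Kmat.IsSymm) (hHmat : IsUnit Hmat) (hHsym : Hmat.IsSymm)
    {y₁ : m → 𝕜} {y₂ : n → 𝕜} {K H f fK fH fKK fKH fHH Δ : 𝕜}
    (hK : (Kmat *ᵥ y₁) ⬝ᵥ y₁ = 2 * K) (hH : (Hmat *ᵥ y₂) ⬝ᵥ y₂ = 2 * H)
    (he : EulerRelations K H f fK fH fKK fKH fHH) (hfK : fK ≠ 0) (hfH : fH ≠ 0)
    (hΔ : Δ = fK * fH - 2 * f * fKH) (hΔ0 : Δ ≠ 0) :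
    (fK • Kmat + fKK • vecMulVec (Kmat *ᵥ y₁) (Kmat *ᵥ y₁)) *
        ((1 / fK) • (Kmat⁻¹ - (fH * fKK / Δ) • vecMulVec y₁ y₁)) +
      (fKH • vecMulVec (Kmat *ᵥ y₁) (Hmat *ᵥ y₂)) * (-(fKH / Δ) • vecMulVec y₂ y₁) = 1 ∧
    (fK • Kmat + fKK • vecMulVec (Kmat *ᵥ y₁) (Kmat *ᵥ y₁)) * (-(fKH / Δ) • vecMulVec y₁ y₂) +
      (fKH • vecMulVec (Kmat *ᵥ y₁) (Hmat *ᵥ y₂)) *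
        ((1 / fH) • (Hmat⁻¹ - (fK * fHH / Δ) • vecMulVec y₂ y₂)) = 0 := by
  simp only [Matrix.mul_smul, Matrix.smul_mul,
    smul_add_smul_vecMulVec_mul_nonsing_inv_sub hKmat hKsym,
    vecMulVec_mulVec_mul_nonsing_inv_sub hHmat hHsym, smul_add_smul_vecMulVec_mul_vecMulVec,
    vecMulVec_mul_vecMulVec, vecMulVec_smul, hK, hH]
  constructor
  · match_scalars
    · field_simp
    · field_simp
      linear_combination fKK * hΔ + 2 * fKK * fKH * he.value - 2 * fKK * fH * he.gradient_K -
        2 * fKK * fK * he.gradient_H - 2 * fK * H * he.hessian_det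
  · match_scalars
    field_simp
    linear_combination fKH * hΔ + 2 * fKH ^ 2 * he.value - 2 * fKH * fH * he.gradient_K -
      2 * fKH * fK * he.gradient_H

end Field

/-- The inverse of the fundamental tensor matrix of a Minkowskian product metric,
expressed as a block matrix. -/
theorem block_matrix_inverse_of_product_tensor {m n : ℕ}
    (Kmat : Matrix (Fin m) (Fin m) ℝ) (Hmat : Matrix (Fin n) (Fin n) ℝ)
    (hKmat : IsUnit Kmat) (hKsym : Kmat.IsSymm) (hHmat : IsUnit Hmat) (hHsym : Hmat.IsSymm)
    (y₁ : Fin m → ℝ) (y₂ : Fin n → ℝ)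
    (U : Fin m → ℝ) (W : Fin n → ℝ)
    (hU : U = Kmat.mulVec y₁) (hW : W = Hmat.mulVec y₂)
    (K H : ℝ) (hK : K = (1 / 2) * (y₁ ⬝ᵥ U)) (hH : H = (1 / 2) * (y₂ ⬝ᵥ W))
    (f fK fH fKK fKH fHH Δ : ℝ)
    (heuler1 : fK * K + fH * H = f)
    (heuler2 : fKK * K + fKH * H = 0)
    (heuler3 : fKH * K + fHH * H = 0)
    (heuler4 : fKH ^ 2 = fKK * fHH)
    (hfK : fK ≠ 0) (hfH : fH ≠ 0)
    (hΔ : Δ = fK * fH - 2 * f * fKH) (hΔ0 : Δ ≠ 0)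
    (G : Matrix (Fin m ⊕ Fin n) (Fin m ⊕ Fin n) ℝ)
    (hG : G = fromBlocks
      (fK • Kmat + fKK • vecMulVec U U) (fKH • vecMulVec U W)
      (fKH • vecMulVec W U) (fH • Hmat + fHH • vecMulVec W W)) :
    IsUnit G ∧
    G⁻¹ = fromBlocks
      ((1 / fK) • (Kmat⁻¹ - (fH * fKK / Δ) • vecMulVec y₁ y₁))
      (-(fKH / Δ) • vecMulVec y₁ y₂)
      (-(fKH / Δ) • vecMulVec y₂ y₁)
      ((1 / fH) • (Hmat⁻¹ - (fK * fHH / Δ) • vecMulVec y₂ y₂)) := by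
  subst hU hW
  refine (fun hGB : G * _ = 1 =>
    ⟨(isUnit_iff_isUnit_det G).2 (isUnit_det_of_right_inverse hGB), inv_eq_right_inv hGB⟩) ?_
  have hE : EulerRelations K H f fK fH fKK fKH fHH := ⟨heuler1, heuler2, heuler3, heuler4⟩
  have hUK : (Kmat *ᵥ y₁) ⬝ᵥ y₁ = 2 * K := by rw [hK, dotProduct_comm]; ring
  have hWH : (Hmat *ᵥ y₂) ⬝ᵥ y₂ = 2 * H := by rw [hH, dotProduct_comm]; ring
  obtain ⟨h₁₁, h₁₂⟩ := product_tensor_block_row_mul_inverse hKmat hKsym hHmat hHsym hUK hWH hE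
    hfK hfH hΔ hΔ0
  obtain ⟨h₂₂, h₂₁⟩ := product_tensor_block_row_mul_inverse hHmat hHsym hKmat hKsym hWH hUK hE.swap
    hfH hfK (by rw [hΔ]; ring) hΔ0
  rw [hG, fromBlocks_multiply, h₁₁, h₁₂, add_comm, h₂₁, add_comm, h₂₂, fromBlocks_one]
end

section
/- Let 𝐊 be an invertible symmetric real m×m matrix, y₁ ∈ ℝ^m, y₂ ∈ ℝ^n, 𝐇 an invertible symmetric real n×n matrix, U = 𝐊y₁, W = 𝐇y₂, K = ½·y₁ᵀU, H = ½·y₂ᵀW. Let f, f_K, f_H, f_KK, f_KH, f_HH be real numbers satisfying f_K·K + f_H·H = f, f_KK·K + f_KH·H = 0, f_KH·K + f_HH·H = 0, with f_K ≠ 0 and Δ := f_K·f_H − 2f·f_KH ≠ 0. Then (1/f_K)·(𝐊⁻¹ − (f_H·f_KK/Δ)·y₁y₁ᵀ)·U = (1/Δ)·(f_H − 2K·f_KH)·y₁, and −(f_KH/Δ)·y₁y₂ᵀ·W = −(2H·f_KH/Δ)·y₁. -/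
open Matrix

/- Both contractions reduce to `𝐊⁻¹U = y₁`, `y₁ᵀU = 2K`, `y₂ᵀW = 2H`, after which the first is the
scalar identity `Δ - 2K f_H f_KK = f_K (f_H - 2K f_KH)`, a consequence of the Euler relations for
`f` and `f_K`. -/

theorem delta_sub_eq_of_euler {K H f fK fH fKK fKH : ℝ}
    (heuler1 : fK * K + fH * H = f) (heuler2 : fKK * K + fKH * H = 0) :
    (fK * fH - 2 * f * fKH) - 2 * K * fH * fKK = fK * (fH - 2 * K * fKH) := by
  linear_combination 2 * fKH * heuler1 - 2 * fH * heuler2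

theorem inv_fK_mul_sub_eq_of_euler {K H f fK fH fKK fKH Δ : ℝ}
    (heuler1 : fK * K + fH * H = f) (heuler2 : fKK * K + fKH * H = 0) (hfK : fK ≠ 0)
    (hΔ : Δ = fK * fH - 2 * f * fKH) (hΔ0 : Δ ≠ 0) :
    1 / fK * (1 - fH * fKK / Δ * (2 * K)) = 1 / Δ * (fH - 2 * K * fKH) := by
  have key := delta_sub_eq_of_euler heuler1 heuler2
  rw [← hΔ] at key
  field_simp
  linear_combination key

theorem vecMulVec_mulVec_eq_smul {R ι κ : Type*} [CommSemiring R] [Fintype κ]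
    (u : ι → R) (v w : κ → R) : vecMulVec u v *ᵥ w = (v ⬝ᵥ w) • u := by
  rw [vecMulVec_mulVec, op_smul_eq_smul]

theorem inverse_tensor_contraction_identities_general {m n : ℕ}
    (Kmat : Matrix (Fin m) (Fin m) ℝ)
    (hKmat : IsUnit Kmat)
    (y₁ : Fin m → ℝ) (y₂ : Fin n → ℝ)
    (U : Fin m → ℝ) (W : Fin n → ℝ)
    (hU : U = Kmat.mulVec y₁)
    (K H : ℝ) (hK : K = (1 / 2) * (y₁ ⬝ᵥ U)) (hH : H = (1 / 2) * (y₂ ⬝ᵥ W))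
    (f fK fH fKK fKH Δ : ℝ)
    (heuler1 : fK * K + fH * H = f)
    (heuler2 : fKK * K + fKH * H = 0)
    (hfK : fK ≠ 0)
    (hΔ : Δ = fK * fH - 2 * f * fKH) (hΔ0 : Δ ≠ 0) :
    ((1 / fK) • (Kmat⁻¹ - (fH * fKK / Δ) • vecMulVec y₁ y₁)).mulVec U =
      ((1 / Δ) * (fH - 2 * K * fKH)) • y₁ ∧
    ((-(fKH / Δ)) • vecMulVec y₁ y₂).mulVec W = (-(2 * H * fKH / Δ)) • y₁ := by
  have := hKmat.invertible
  have hinv : Kmat⁻¹ *ᵥ U = y₁ := inv_mulVec_eq_vec hU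
  have hy₁U : y₁ ⬝ᵥ U = 2 * K := by rw [hK]; ring
  have hy₂W : y₂ ⬝ᵥ W = 2 * H := by rw [hH]; ring
  constructor
  · rw [smul_mulVec, sub_mulVec, smul_mulVec, hinv, vecMulVec_mulVec_eq_smul, hy₁U,
      ← inv_fK_mul_sub_eq_of_euler heuler1 heuler2 hfK hΔ hΔ0]
    module
  · rw [smul_mulVec, vecMulVec_mulVec_eq_smul, hy₂W, smul_smul]
    congr 1
    ring

/-- The coordinate identities `G^{ih}K_h = (1/Δ)(f_H − 2K f_KH)y^i` and
`G^{ih'}H_{h'} = −(2H f_KH/Δ)y^i` for the inverse fundamental tensor of a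
Minkowskian product Finsler metric. -/
theorem inverse_tensor_contraction_identities {m n : ℕ}
    (Kmat : Matrix (Fin m) (Fin m) ℝ) (Hmat : Matrix (Fin n) (Fin n) ℝ)
    (hKmat : IsUnit Kmat) (hKsym : Kmat.IsSymm) (hHmat : IsUnit Hmat) (hHsym : Hmat.IsSymm)
    (y₁ : Fin m → ℝ) (y₂ : Fin n → ℝ)
    (U : Fin m → ℝ) (W : Fin n → ℝ)
    (hU : U = Kmat.mulVec y₁) (hW : W = Hmat.mulVec y₂)
    (K H : ℝ) (hK : K = (1 / 2) * (y₁ ⬝ᵥ U)) (hH : H = (1 / 2) * (y₂ ⬝ᵥ W))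
    (f fK fH fKK fKH fHH Δ : ℝ)
    (heuler1 : fK * K + fH * H = f)
    (heuler2 : fKK * K + fKH * H = 0)
    (heuler3 : fKH * K + fHH * H = 0)
    (hfK : fK ≠ 0)
    (hΔ : Δ = fK * fH - 2 * f * fKH) (hΔ0 : Δ ≠ 0) :
    ((1 / fK) • (Kmat⁻¹ - (fH * fKK / Δ) • vecMulVec y₁ y₁)).mulVec U =
      ((1 / Δ) * (fH - 2 * K * fKH)) • y₁ ∧
    ((-(fKH / Δ)) • vecMulVec y₁ y₂).mulVec W = (-(2 * H * fKH / Δ)) • y₁ :=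
  inverse_tensor_contraction_identities_general Kmat hKmat y₁ y₂ U W hU K H hK hH f fK fH fKK fKH Δ
    heuler1 heuler2 hfK hΔ hΔ0
end

section
/- Let F be the Minkowskian product of Finsler metrics F₁ and F₂ with respect to a product function f. Then at every point (x,y) = ((x₁,x₂),(y₁,y₂)) with y₁ ≠ 0 and y₂ ≠ 0, the geodesic spray coefficients of F split: 𝔾^i(x,y) = 𝔾₁^i(x₁,y₁) for every index i in the first block (1 ≤ i ≤ m), and 𝔾^{i'}(x,y) = 𝔾₂^{i'}(x₂,y₂) for every index i' in the second block (m+1 ≤ i' ≤ m+n), where 𝔾₁ and 𝔾₂ are the spray coefficients of F₁ and F₂. -/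
open Matrix

/-- Partial derivative in the fiber variable `y` in the direction of the `α`-th
coordinate, for a function `g (x, y)` of a base point and a fiber vector. -/
noncomputable def pdy {ι : Type*} [Fintype ι] [DecidableEq ι]
    (g : (ι → ℝ) → (ι → ℝ) → ℝ) (α : ι) : (ι → ℝ) → (ι → ℝ) → ℝ :=
  fun x y => fderiv ℝ (g x) y (Pi.single α 1)

/-- Partial derivative in the base variable `x` in the direction of the `γ`-th
coordinate, for a function `g (x, y)` of a base point and a fiber vector. -/
noncomputable def pdx {ι : Type*} [Fintype ι] [DecidableEq ι]
    (g : (ι → ℝ) → (ι → ℝ) → ℝ) (γ : ι) : (ι → ℝ) → (ι → ℝ) → ℝ :=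
  fun x y => fderiv ℝ (fun x' => g x' y) x (Pi.single γ 1)

/-- The fundamental tensor `(G_{αβ}) = (∂²(F²)/∂y^α∂y^β)` of a Finsler metric `F`. -/
noncomputable def fundTensor {ι : Type*} [Fintype ι] [DecidableEq ι]
    (F : (ι → ℝ) → (ι → ℝ) → ℝ) (x y : ι → ℝ) : Matrix ι ι ℝ :=
  fun α β => pdy (pdy (fun x' y' => (F x' y') ^ 2) β) α x y

/-- `F` is a Finsler metric on the open set `U`: `G = F²` is smooth on the slit
domain, `F` is positive for `y ≠ 0`, absolutely 1-homogeneous in `y`, and its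
fundamental tensor is positive definite for `y ≠ 0`. -/
structure IsFinslerMetric {ι : Type*} [Fintype ι] [DecidableEq ι]
    (U : Set (ι → ℝ)) (F : (ι → ℝ) → (ι → ℝ) → ℝ) : Prop where
  isOpen : IsOpen U
  smooth : ContDiffOn ℝ (⊤ : ℕ∞) (fun p : (ι → ℝ) × (ι → ℝ) => (F p.1 p.2) ^ 2)
    (U ×ˢ {y | y ≠ 0})
  pos : ∀ x ∈ U, ∀ y : ι → ℝ, y ≠ 0 → 0 < F x y
  homog : ∀ x ∈ U, ∀ (y : ι → ℝ) (c : ℝ), F x (c • y) = |c| * F x y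
  posDef : ∀ x ∈ U, ∀ y : ι → ℝ, y ≠ 0 → (fundTensor F x y).PosDef

/-- The geodesic spray coefficients
`𝔾^α = ½ G^{αβ}(∂²G/∂y^β∂x^γ · y^γ − ∂G/∂x^β)` of a Finsler metric `F`. -/
noncomputable def spray {ι : Type*} [Fintype ι] [DecidableEq ι]
    (F : (ι → ℝ) → (ι → ℝ) → ℝ) (α : ι) : (ι → ℝ) → (ι → ℝ) → ℝ :=
  fun x y => (1 / 2) * ∑ β, (fundTensor F x y)⁻¹ α β *
    ((∑ γ, pdx (pdy (fun x' y' => (F x' y') ^ 2) β) γ x y * y γ) -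
      pdx (fun x' y' => (F x' y') ^ 2) β x y)

/-- The Cartan nonlinear connection coefficients `Γ^α_β = ∂𝔾^α/∂y^β`. -/
noncomputable def nonlinConn {ι : Type*} [Fintype ι] [DecidableEq ι]
    (F : (ι → ℝ) → (ι → ℝ) → ℝ) (α β : ι) : (ι → ℝ) → (ι → ℝ) → ℝ :=
  pdy (spray F α) β

/-- The Berwald connection coefficients `Γ̌^α_{β;γ} = ∂Γ^α_γ/∂y^β = ∂²𝔾^α/∂y^β∂y^γ`. -/
noncomputable def berwaldConn {ι : Type*} [Fintype ι] [DecidableEq ι]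
    (F : (ι → ℝ) → (ι → ℝ) → ℝ) (α β γ : ι) : (ι → ℝ) → (ι → ℝ) → ℝ :=
  pdy (nonlinConn F α γ) β

/-- The Berwald curvature `B^α_{βγη} = ∂³𝔾^α/∂y^β∂y^γ∂y^η`. -/
noncomputable def berwaldCurv {ι : Type*} [Fintype ι] [DecidableEq ι]
    (F : (ι → ℝ) → (ι → ℝ) → ℝ) (α β γ η : ι) : (ι → ℝ) → (ι → ℝ) → ℝ :=
  pdy (pdy (pdy (spray F α) η) γ) β

/-- The mean Berwald curvature `E_{βγ} = ½ B^α_{βγα}` (sum over `α`). -/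
noncomputable def meanBerwaldCurv {ι : Type*} [Fintype ι] [DecidableEq ι]
    (F : (ι → ℝ) → (ι → ℝ) → ℝ) (β γ : ι) : (ι → ℝ) → (ι → ℝ) → ℝ :=
  fun x y => (1 / 2) * ∑ α, berwaldCurv F α β γ α x y

/-- The Landsberg curvature `L_{βγη} = −¼ y^ν G_{να} B^α_{βγη}` (sums over `ν, α`). -/
noncomputable def landsbergCurv {ι : Type*} [Fintype ι] [DecidableEq ι]
    (F : (ι → ℝ) → (ι → ℝ) → ℝ) (β γ η : ι) : (ι → ℝ) → (ι → ℝ) → ℝ :=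
  fun x y => -(1 / 4) * ∑ ν, ∑ α, y ν * fundTensor F x y ν α * berwaldCurv F α β γ η x y

/-- The mean Landsberg curvature `J_α = 2 G^{βγ} L_{αβγ}` (sums over `β, γ`). -/
noncomputable def meanLandsbergCurv {ι : Type*} [Fintype ι] [DecidableEq ι]
    (F : (ι → ℝ) → (ι → ℝ) → ℝ) (α : ι) : (ι → ℝ) → (ι → ℝ) → ℝ :=
  fun x y => 2 * ∑ β, ∑ γ, (fundTensor F x y)⁻¹ β γ * landsbergCurv F α β γ x y

/-- Partial derivative of `f : ℝ → ℝ → ℝ` with respect to the first variable. -/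
noncomputable def pderivS (f : ℝ → ℝ → ℝ) (s t : ℝ) : ℝ := deriv (fun u => f u t) s

/-- Partial derivative of `f : ℝ → ℝ → ℝ` with respect to the second variable. -/
noncomputable def pderivT (f : ℝ → ℝ → ℝ) (s t : ℝ) : ℝ := deriv (fun v => f s v) t

/-- `f_st = ∂²f/∂s∂t`. -/
noncomputable def pderivST (f : ℝ → ℝ → ℝ) (s t : ℝ) : ℝ :=
  deriv (fun u => pderivT f u t) s

/-- The data of a Minkowskian product: `F₁, F₂` are Finsler metrics on `U₁, U₂`,
`f` is an admissible product function, and `F = √(f(F₁², F₂²))` is the Minkowskian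
product metric, itself assumed to be a Finsler metric on `U₁ × U₂`. -/
structure IsMinkowskianProduct {m n : ℕ}
    (U₁ : Set (Fin m → ℝ)) (U₂ : Set (Fin n → ℝ))
    (F₁ : (Fin m → ℝ) → (Fin m → ℝ) → ℝ) (F₂ : (Fin n → ℝ) → (Fin n → ℝ) → ℝ)
    (f : ℝ → ℝ → ℝ)
    (F : (Fin m ⊕ Fin n → ℝ) → (Fin m ⊕ Fin n → ℝ) → ℝ) : Prop where
  finsler₁ : IsFinslerMetric U₁ F₁
  finsler₂ : IsFinslerMetric U₂ F₂
  f_cont : ContinuousOn (fun p : ℝ × ℝ => f p.1 p.2) (Set.Ici 0 ×ˢ Set.Ici 0)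
  f_nonneg : ∀ s ∈ Set.Ici (0 : ℝ), ∀ t ∈ Set.Ici (0 : ℝ), 0 ≤ f s t
  f_zero_iff : ∀ s ∈ Set.Ici (0 : ℝ), ∀ t ∈ Set.Ici (0 : ℝ),
    (f s t = 0 ↔ s = 0 ∧ t = 0)
  f_homog : ∀ c ∈ Set.Ici (0 : ℝ), ∀ s ∈ Set.Ici (0 : ℝ), ∀ t ∈ Set.Ici (0 : ℝ),
    f (c * s) (c * t) = c * f s t
  f_smooth : ContDiffOn ℝ (⊤ : ℕ∞) (fun p : ℝ × ℝ => f p.1 p.2)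
    (Set.Ioi 0 ×ˢ Set.Ioi 0)
  fs_ne : ∀ s > (0 : ℝ), ∀ t > (0 : ℝ), pderivS f s t ≠ 0
  ft_ne : ∀ s > (0 : ℝ), ∀ t > (0 : ℝ), pderivT f s t ≠ 0
  delta_ne : ∀ s > (0 : ℝ), ∀ t > (0 : ℝ),
    pderivS f s t * pderivT f s t - 2 * f s t * pderivST f s t ≠ 0
  F_def : ∀ (x y : Fin m ⊕ Fin n → ℝ),
    F x y = Real.sqrt (f ((F₁ (x ∘ Sum.inl) (y ∘ Sum.inl)) ^ 2)
      ((F₂ (x ∘ Sum.inr) (y ∘ Sum.inr)) ^ 2))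
  finsler : IsFinslerMetric
    {x : Fin m ⊕ Fin n → ℝ | (x ∘ Sum.inl) ∈ U₁ ∧ (x ∘ Sum.inr) ∈ U₂} F

/-!
Write `G = F²`, `K = F₁²`, `H = F₂²`, so that `G = f(K, H)`. The vector `2𝔾` is the unique
solution `v` of the linear system `G_{yy}(w, v) = G_{xy}(y, w) - G_x(w)` (for all `w`), whose
matrix is the invertible fundamental tensor. Differentiating `G = f(K, H)` twice, the system for
`G` is `f_s` times the one for `K` plus `f_t` times the one for `H`, plus a Hessian-of-`f` term
that matches on both sides as soon as `K_y(v₁) = K_x(y₁)` and `H_y(v₂) = H_x(y₂)`. For the sprays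
of `K` and `H` these identities follow from Euler's relations for functions that are
2-homogeneous in `y`. Hence `v = (2𝔾₁, 2𝔾₂)` solves the system for `G`.
-/

open Filter Topology

section SecondDerivative

variable {𝕜 : Type*} [NontriviallyNormedField 𝕜]
  {E F G : Type*} [NormedAddCommGroup E] [NormedSpace 𝕜 E] [NormedAddCommGroup F]
  [NormedSpace 𝕜 F] [NormedAddCommGroup G] [NormedSpace 𝕜 G]

theorem fderiv_fderiv_comp_apply {g : F → G} {Ψ : E → F} {p : E}
    (hg : ContDiffAt 𝕜 2 g (Ψ p)) (hΨ : ContDiffAt 𝕜 2 Ψ p) (u w : E) :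
    fderiv 𝕜 (fderiv 𝕜 (g ∘ Ψ)) p u w =
      fderiv 𝕜 g (Ψ p) (fderiv 𝕜 (fderiv 𝕜 Ψ) p u w) +
        fderiv 𝕜 (fderiv 𝕜 g) (Ψ p) (fderiv 𝕜 Ψ p u) (fderiv 𝕜 Ψ p w) := by
  have hg' : ∀ᶠ q in 𝓝 p, DifferentiableAt 𝕜 g (Ψ q) :=
    hΨ.continuousAt.eventually ((hg.eventually (by simp)).mono
      fun _ h ↦ h.differentiableAt two_ne_zero)
  have hΨ' : ∀ᶠ q in 𝓝 p, DifferentiableAt 𝕜 Ψ q :=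
    (hΨ.eventually (by simp)).mono fun _ h ↦ h.differentiableAt two_ne_zero
  have hD : fderiv 𝕜 (g ∘ Ψ) =ᶠ[𝓝 p] fun q ↦ (fderiv 𝕜 g (Ψ q)).comp (fderiv 𝕜 Ψ q) := by
    filter_upwards [hg', hΨ'] with q hgq hΨq using fderiv_comp q hgq hΨq
  have hDg : HasFDerivAt (fun q ↦ fderiv 𝕜 g (Ψ q))
      ((fderiv 𝕜 (fderiv 𝕜 g) (Ψ p)).comp (fderiv 𝕜 Ψ p)) p :=
    ((hg.fderiv_right (m := 1) le_rfl).differentiableAt one_ne_zero).hasFDerivAt.comp p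
      (hΨ.differentiableAt two_ne_zero).hasFDerivAt
  have hDΨ : HasFDerivAt (fderiv 𝕜 Ψ) (fderiv 𝕜 (fderiv 𝕜 Ψ) p) p :=
    ((hΨ.fderiv_right (m := 1) le_rfl).differentiableAt one_ne_zero).hasFDerivAt
  rw [hD.fderiv_eq, (hDg.clm_comp hDΨ).fderiv]
  simp [add_comm]

theorem fderiv_fderiv_clm_comp_apply (L : F →L[𝕜] G) {Ψ : E → F} {p : E}
    (hΨ : ContDiffAt 𝕜 2 Ψ p) (u w : E) :
    fderiv 𝕜 (fderiv 𝕜 (L ∘ Ψ)) p u w = L (fderiv 𝕜 (fderiv 𝕜 Ψ) p u w) := by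
  have hL : fderiv 𝕜 L = fun _ ↦ L := funext fun _ ↦ L.fderiv
  simp [fderiv_fderiv_comp_apply L.contDiff.contDiffAt hΨ, hL]

theorem fderiv_fderiv_comp_clm_apply {g : F → G} (L : E →L[𝕜] F) {p : E}
    (hg : ContDiffAt 𝕜 2 g (L p)) (u w : E) :
    fderiv 𝕜 (fderiv 𝕜 (g ∘ L)) p u w = fderiv 𝕜 (fderiv 𝕜 g) (L p) (L u) (L w) := by
  have hL : fderiv 𝕜 L = fun _ ↦ L := funext fun _ ↦ L.fderiv
  simp [fderiv_fderiv_comp_apply hg L.contDiff.contDiffAt, hL]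

theorem fderiv_fderiv_prodMk_apply {A : E → F} {B : E → G} {p : E}
    (hA : ContDiffAt 𝕜 2 A p) (hB : ContDiffAt 𝕜 2 B p) (u w : E) :
    fderiv 𝕜 (fderiv 𝕜 fun q ↦ (A q, B q)) p u w =
      (fderiv 𝕜 (fderiv 𝕜 A) p u w, fderiv 𝕜 (fderiv 𝕜 B) p u w) := by
  ext
  · exact (fderiv_fderiv_clm_comp_apply (ContinuousLinearMap.fst 𝕜 F G) (hA.prodMk hB) u w).symm
  · exact (fderiv_fderiv_clm_comp_apply (ContinuousLinearMap.snd 𝕜 F G) (hA.prodMk hB) u w).symm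

end SecondDerivative

section Homogeneous

variable {E : Type*} [NormedAddCommGroup E] [NormedSpace ℝ E] {K : E × E → ℝ}

theorem fderiv_apply_zero_snd_of_homogeneous {q : E × E} (hK : DifferentiableAt ℝ K q)
    (hhom : ∀ c : ℝ, 0 < c → K (q.1, c • q.2) = c ^ 2 * K q) :
    fderiv ℝ K q (0, q.2) = 2 * K q := by
  have hline : HasDerivAt (fun c : ℝ ↦ (q.1, c • q.2)) (0, q.2) 1 := by
    simpa using (hasDerivAt_const (1 : ℝ) q.1).prodMk ((hasDerivAt_id (1 : ℝ)).smul_const q.2)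
  have hK' : HasFDerivAt K (fderiv ℝ K q) (q.1, (1 : ℝ) • q.2) := by
    simpa using hK.hasFDerivAt
  have hcomp := hK'.comp_hasDerivAt (1 : ℝ) hline
  have hsq : HasDerivAt (fun c : ℝ ↦ c ^ 2 * K q) (2 * K q) 1 := by
    simpa using (hasDerivAt_pow 2 (1 : ℝ)).mul_const (K q)
  refine hcomp.unique (hsq.congr_of_eventuallyEq ?_)
  filter_upwards [Ioi_mem_nhds one_pos] with c hc using hhom c hc

theorem fderiv_fderiv_apply_zero_snd_of_homogeneous {p : E × E} (hK : ContDiffAt ℝ 2 K p)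
    (hhom : ∀ᶠ q in 𝓝 p, ∀ c : ℝ, 0 < c → K (q.1, c • q.2) = c ^ 2 * K q) (w : E × E) :
    fderiv ℝ (fderiv ℝ K) p w (0, p.2) = 2 * fderiv ℝ K p (w.1, 0) + fderiv ℝ K p (0, w.2) := by
  set J := (ContinuousLinearMap.inr ℝ E E).comp (ContinuousLinearMap.snd ℝ E E)
  have hEuler : (fun q ↦ fderiv ℝ K q (J q)) =ᶠ[𝓝 p] fun q ↦ 2 * K q := by
    filter_upwards [hhom,
      (hK.eventually (by simp)).mono fun _ h ↦ h.differentiableAt two_ne_zero]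
      with q hq hKq using fderiv_apply_zero_snd_of_homogeneous hKq hq
  have hlhs :=
    ((hK.fderiv_right (m := 1) le_rfl).differentiableAt one_ne_zero).hasFDerivAt.clm_apply
      J.hasFDerivAt
  have hrhs := ((hK.differentiableAt two_ne_zero).hasFDerivAt).const_mul 2
  have h := congrArg (· w) ((hlhs.congr_of_eventuallyEq hEuler.symm).unique hrhs)
  have hw : fderiv ℝ K p w = fderiv ℝ K p (w.1, 0) + fderiv ℝ K p (0, w.2) := by
    rw [← map_add, Prod.mk_add_mk, add_zero, zero_add]
  simp [J] at h
  linarith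

end Homogeneous

section SprayEquation

variable {E : Type*} [NormedAddCommGroup E] [NormedSpace ℝ E]

/-- In coordinates: `G_{y^α y^β} v^β = G_{y^α x^γ} y^γ - G_{x^α}`, solved by `v = 2𝔾`. -/
def SolvesSprayEq (G : E × E → ℝ) (x y v : E) : Prop :=
  ∀ w, fderiv ℝ (fderiv ℝ G) (x, y) (0, w) (0, v) =
    fderiv ℝ (fderiv ℝ G) (x, y) (y, 0) (0, w) - fderiv ℝ G (x, y) (w, 0)

theorem SolvesSprayEq.fderiv_apply_zero_snd {K : E × E → ℝ} {x y v : E}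
    (hK : ContDiffAt ℝ 2 K (x, y))
    (hhom : ∀ᶠ q in 𝓝 (x, y), ∀ c : ℝ, 0 < c → K (q.1, c • q.2) = c ^ 2 * K q)
    (hv : SolvesSprayEq K x y v) :
    fderiv ℝ K (x, y) (0, v) = fderiv ℝ K (x, y) (y, 0) := by
  have h := hv y
  rw [hK.isSymmSndFDerivAt (by simp) (0, y) (0, v)] at h
  simp only [fderiv_fderiv_apply_zero_snd_of_homogeneous hK hhom, Prod.mk_zero_zero, map_zero,
    mul_zero, zero_add, add_zero] at h
  linarith

variable {E₁ E₂ : Type*} [NormedAddCommGroup E₁] [NormedSpace ℝ E₁]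
  [NormedAddCommGroup E₂] [NormedSpace ℝ E₂]

theorem SolvesSprayEq.minkowskianProduct (Λ₁ : E →L[ℝ] E₁) (Λ₂ : E →L[ℝ] E₂)
    {φ : ℝ × ℝ → ℝ} {K : E₁ × E₁ → ℝ} {H : E₂ × E₂ → ℝ} {x y v : E}
    (hφ : ContDiffAt ℝ 2 φ (K (Λ₁ x, Λ₁ y), H (Λ₂ x, Λ₂ y)))
    (hK : ContDiffAt ℝ 2 K (Λ₁ x, Λ₁ y)) (hH : ContDiffAt ℝ 2 H (Λ₂ x, Λ₂ y))
    (hKhom : ∀ᶠ q in 𝓝 (Λ₁ x, Λ₁ y), ∀ c : ℝ, 0 < c → K (q.1, c • q.2) = c ^ 2 * K q)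
    (hHhom : ∀ᶠ q in 𝓝 (Λ₂ x, Λ₂ y), ∀ c : ℝ, 0 < c → H (q.1, c • q.2) = c ^ 2 * H q)
    (hKv : SolvesSprayEq K (Λ₁ x) (Λ₁ y) (Λ₁ v))
    (hHv : SolvesSprayEq H (Λ₂ x) (Λ₂ y) (Λ₂ v)) :
    SolvesSprayEq (fun p ↦ φ (K (Λ₁ p.1, Λ₁ p.2), H (Λ₂ p.1, Λ₂ p.2))) x y v := by
  set L₁ := Λ₁.prodMap Λ₁
  set L₂ := Λ₂.prodMap Λ₂
  set Ψ : E × E → ℝ × ℝ := fun p ↦ ((K ∘ L₁) p, (H ∘ L₂) p)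
  have hKv' := hKv.fderiv_apply_zero_snd hK hKhom
  have hHv' := hHv.fderiv_apply_zero_snd hH hHhom
  replace hK : ContDiffAt ℝ 2 K (L₁ (x, y)) := hK
  replace hH : ContDiffAt ℝ 2 H (L₂ (x, y)) := hH
  replace hφ : ContDiffAt ℝ 2 φ (Ψ (x, y)) := hφ
  have hKL : ContDiffAt ℝ 2 (K ∘ L₁) (x, y) := hK.comp (x, y) L₁.contDiff.contDiffAt
  have hHL : ContDiffAt ℝ 2 (H ∘ L₂) (x, y) := hH.comp (x, y) L₂.contDiff.contDiffAt
  have hΨ : ContDiffAt ℝ 2 Ψ (x, y) := hKL.prodMk hHL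
  have hDΨ : ∀ u, fderiv ℝ Ψ (x, y) u =
      (fderiv ℝ K (L₁ (x, y)) (L₁ u), fderiv ℝ H (L₂ (x, y)) (L₂ u)) := by
    intro u
    rw [DifferentiableAt.fderiv_prodMk (hKL.differentiableAt two_ne_zero)
      (hHL.differentiableAt two_ne_zero)]
    simp [fderiv_comp _ (hK.differentiableAt two_ne_zero) L₁.differentiableAt,
      fderiv_comp _ (hH.differentiableAt two_ne_zero) L₂.differentiableAt]
  have hD2Ψ : ∀ u w, fderiv ℝ (fderiv ℝ Ψ) (x, y) u w =
      (fderiv ℝ (fderiv ℝ K) (L₁ (x, y)) (L₁ u) (L₁ w),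
        fderiv ℝ (fderiv ℝ H) (L₂ (x, y)) (L₂ u) (L₂ w)) := fun u w ↦ by
    rw [fderiv_fderiv_prodMk_apply hKL hHL, fderiv_fderiv_comp_clm_apply L₁ hK,
      fderiv_fderiv_comp_clm_apply L₂ hH]
  change SolvesSprayEq (φ ∘ Ψ) x y v
  intro w
  rw [fderiv_fderiv_comp_apply (Ψ := Ψ) hφ hΨ, fderiv_fderiv_comp_apply (Ψ := Ψ) hφ hΨ,
    fderiv_comp (g := φ) (f := Ψ) _ (hφ.differentiableAt two_ne_zero)
      (hΨ.differentiableAt two_ne_zero)]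
  simp only [hDΨ, hD2Ψ, ContinuousLinearMap.comp_apply]
  simp only [L₁, L₂, ContinuousLinearMap.coe_prodMap', Prod.map_apply, map_zero]
  rw [hKv (Λ₁ w), hHv (Λ₂ w), hKv', hHv', hφ.isSymmSndFDerivAt (by simp), ← Prod.mk_sub_mk,
    map_sub]
  ring

end SprayEquation

section Coordinates

variable {ι : Type*} [Fintype ι] [DecidableEq ι]

theorem sum_mul_apply_single (T : (ι → ℝ) →L[ℝ] ℝ) (v : ι → ℝ) :
    ∑ β, v β * T (Pi.single β 1) = T v := by
  conv_rhs => rw [← Finset.univ_sum_single v, map_sum]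
  refine Finset.sum_congr rfl fun β _ ↦ ?_
  rw [← smul_eq_mul, ← map_smul, ← Pi.single_smul', smul_eq_mul, mul_one]

variable {g : (ι → ℝ) → (ι → ℝ) → ℝ} {x y : ι → ℝ}

theorem pdy_eq_fderiv (h : DifferentiableAt ℝ (Function.uncurry g) (x, y)) (β : ι) :
    pdy g β x y = fderiv ℝ (Function.uncurry g) (x, y) (0, Pi.single β 1) := by
  have hg : HasFDerivAt (g x) _ y := h.hasFDerivAt.comp y (hasFDerivAt_prodMk_right x y)
  rw [pdy, hg.fderiv]
  rfl

theorem pdx_eq_fderiv (h : DifferentiableAt ℝ (Function.uncurry g) (x, y)) (γ : ι) :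
    pdx g γ x y = fderiv ℝ (Function.uncurry g) (x, y) (Pi.single γ 1, 0) := by
  have hg : HasFDerivAt (fun x' ↦ g x' y)
      ((fderiv ℝ (Function.uncurry g) (x, y)).comp (.inl ℝ _ _)) x := by
    have := h.hasFDerivAt.comp x (hasFDerivAt_prodMk_left (𝕜 := ℝ) x y)
    exact this
  rw [pdx, hg.fderiv]
  rfl

theorem hasFDerivAt_uncurry_pdy (h : ContDiffAt ℝ 2 (Function.uncurry g) (x, y)) (β : ι) :
    HasFDerivAt (Function.uncurry (pdy g β))
      ((fderiv ℝ (fderiv ℝ (Function.uncurry g)) (x, y)).flip (0, Pi.single β 1)) (x, y) := by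
  have hD : Function.uncurry (pdy g β) =ᶠ[𝓝 (x, y)]
      fun p ↦ fderiv ℝ (Function.uncurry g) p (0, Pi.single β 1) := by
    filter_upwards [h.eventually (by simp)] with p hp
    exact pdy_eq_fderiv (hp.differentiableAt two_ne_zero) β
  have hD2 := ((h.fderiv_right (m := 1) le_rfl).differentiableAt one_ne_zero).hasFDerivAt
  simpa using
    (hD2.clm_apply (hasFDerivAt_const (0, Pi.single β 1) (x, y))).congr_of_eventuallyEq hD

theorem pdy_pdy_eq_fderiv_fderiv (h : ContDiffAt ℝ 2 (Function.uncurry g) (x, y)) (α β : ι) :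
    pdy (pdy g β) α x y =
      fderiv ℝ (fderiv ℝ (Function.uncurry g)) (x, y) (0, Pi.single α 1) (0, Pi.single β 1) := by
  rw [pdy_eq_fderiv (hasFDerivAt_uncurry_pdy h β).differentiableAt,
    (hasFDerivAt_uncurry_pdy h β).fderiv]
  rfl

theorem pdx_pdy_eq_fderiv_fderiv (h : ContDiffAt ℝ 2 (Function.uncurry g) (x, y)) (γ β : ι) :
    pdx (pdy g β) γ x y =
      fderiv ℝ (fderiv ℝ (Function.uncurry g)) (x, y) (Pi.single γ 1, 0) (0, Pi.single β 1) := by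
  rw [pdx_eq_fderiv (hasFDerivAt_uncurry_pdy h β).differentiableAt,
    (hasFDerivAt_uncurry_pdy h β).fderiv]
  rfl

end Coordinates

section Spray

variable {ι : Type*} [Fintype ι] [DecidableEq ι] {x y v : ι → ℝ}

theorem solvesSprayEq_iff_forall_single {G : (ι → ℝ) × (ι → ℝ) → ℝ} :
    SolvesSprayEq G x y v ↔ ∀ α, fderiv ℝ (fderiv ℝ G) (x, y) (0, Pi.single α 1) (0, v) =
      fderiv ℝ (fderiv ℝ G) (x, y) (y, 0) (0, Pi.single α 1) -
        fderiv ℝ G (x, y) (Pi.single α 1, 0) := by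
  refine ⟨fun h α ↦ h _, fun h w ↦ ?_⟩
  set D2 := fderiv ℝ (fderiv ℝ G) (x, y)
  set D := fderiv ℝ G (x, y)
  calc D2 (0, w) (0, v) = ∑ α, w α * D2 (0, Pi.single α 1) (0, v) :=
        (sum_mul_apply_single ((D2.comp (.inr ℝ _ _)).flip (0, v)) w).symm
    _ = ∑ α, w α * (D2 (y, 0) (0, Pi.single α 1) - D (Pi.single α 1, 0)) := by simp_rw [h]
    _ = D2 (y, 0) (0, w) - D (w, 0) :=
        sum_mul_apply_single ((D2 (y, 0)).comp (.inr ℝ _ _) - D.comp (.inl ℝ _ _)) w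

variable {F : (ι → ℝ) → (ι → ℝ) → ℝ}

theorem fundTensor_mulVec_apply
    (hG : ContDiffAt ℝ 2 (Function.uncurry fun x y ↦ F x y ^ 2) (x, y)) (v : ι → ℝ) (α : ι) :
    (fundTensor F x y *ᵥ v) α =
      fderiv ℝ (fderiv ℝ (Function.uncurry fun x y ↦ F x y ^ 2)) (x, y)
        (0, Pi.single α 1) (0, v) := by
  simp only [Matrix.mulVec, dotProduct, fundTensor, pdy_pdy_eq_fderiv_fderiv hG]
  exact (Finset.sum_congr rfl fun _ _ ↦ mul_comm _ _).trans (sum_mul_apply_single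
    ((fderiv ℝ (fderiv ℝ (Function.uncurry fun x y ↦ F x y ^ 2)) (x, y) (0, Pi.single α 1)).comp
      (.inr ℝ _ _)) v)

theorem two_mul_spray (hG : ContDiffAt ℝ 2 (Function.uncurry fun x y ↦ F x y ^ 2) (x, y)) :
    (fun α ↦ 2 * spray F α x y) = (fundTensor F x y)⁻¹ *ᵥ fun β ↦
      fderiv ℝ (fderiv ℝ (Function.uncurry fun x y ↦ F x y ^ 2)) (x, y)
          (y, 0) (0, Pi.single β 1) -
        fderiv ℝ (Function.uncurry fun x y ↦ F x y ^ 2) (x, y) (Pi.single β 1, 0) := by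
  have hsum : ∀ β, ∑ γ, fderiv ℝ (fderiv ℝ (Function.uncurry fun x y ↦ F x y ^ 2)) (x, y)
      (Pi.single γ 1, 0) (0, Pi.single β 1) * y γ =
        fderiv ℝ (fderiv ℝ (Function.uncurry fun x y ↦ F x y ^ 2)) (x, y)
          (y, 0) (0, Pi.single β 1) :=
    fun β ↦ (Finset.sum_congr rfl fun _ _ ↦ mul_comm _ _).trans (sum_mul_apply_single
      ((fderiv ℝ (fderiv ℝ (Function.uncurry fun x y ↦ F x y ^ 2)) (x, y)).comp (.inl ℝ _ _)
        |>.flip (0, Pi.single β 1)) y)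
  funext α
  simp only [spray, Matrix.mulVec, dotProduct, pdx_pdy_eq_fderiv_fderiv hG,
    pdx_eq_fderiv (hG.differentiableAt two_ne_zero), hsum]
  ring

theorem solvesSprayEq_iff_fundTensor_mulVec
    (hG : ContDiffAt ℝ 2 (Function.uncurry fun x y ↦ F x y ^ 2) (x, y)) :
    SolvesSprayEq (Function.uncurry fun x y ↦ F x y ^ 2) x y v ↔
      fundTensor F x y *ᵥ v = fun β ↦
        fderiv ℝ (fderiv ℝ (Function.uncurry fun x y ↦ F x y ^ 2)) (x, y)
            (y, 0) (0, Pi.single β 1) -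
          fderiv ℝ (Function.uncurry fun x y ↦ F x y ^ 2) (x, y) (Pi.single β 1, 0) := by
  simp only [solvesSprayEq_iff_forall_single, funext_iff, fundTensor_mulVec_apply hG]

theorem solvesSprayEq_two_mul_spray
    (hG : ContDiffAt ℝ 2 (Function.uncurry fun x y ↦ F x y ^ 2) (x, y))
    (hdet : IsUnit (fundTensor F x y).det) :
    SolvesSprayEq (Function.uncurry fun x y ↦ F x y ^ 2) x y fun α ↦ 2 * spray F α x y := by
  rw [solvesSprayEq_iff_fundTensor_mulVec hG, two_mul_spray hG, Matrix.mulVec_mulVec,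
    Matrix.mul_nonsing_inv _ hdet, Matrix.one_mulVec]

theorem spray_eq_half_of_solvesSprayEq
    (hG : ContDiffAt ℝ 2 (Function.uncurry fun x y ↦ F x y ^ 2) (x, y))
    (hdet : IsUnit (fundTensor F x y).det)
    (hv : SolvesSprayEq (Function.uncurry fun x y ↦ F x y ^ 2) x y v) (α : ι) :
    spray F α x y = v α / 2 := by
  have h := congrFun (two_mul_spray hG) α
  rw [← (solvesSprayEq_iff_fundTensor_mulVec hG).1 hv, Matrix.mulVec_mulVec,
    Matrix.nonsing_inv_mul _ hdet, Matrix.one_mulVec] at h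
  linarith

end Spray

namespace IsFinslerMetric

variable {ι : Type*} [Fintype ι] [DecidableEq ι] {U : Set (ι → ℝ)}
  {F : (ι → ℝ) → (ι → ℝ) → ℝ} {x y : ι → ℝ}

theorem contDiffAt (hF : IsFinslerMetric U F) (hx : x ∈ U) (hy : y ≠ 0) :
    ContDiffAt ℝ 2 (Function.uncurry fun x y ↦ F x y ^ 2) (x, y) :=
  (hF.smooth.contDiffAt ((hF.isOpen.prod isOpen_compl_singleton).mem_nhds
    (Set.mk_mem_prod hx hy))).of_le (WithTop.coe_le_coe.mpr le_top)

theorem eventually_homogeneous (hF : IsFinslerMetric U F) (hx : x ∈ U) :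
    ∀ᶠ q in 𝓝 (x, y), ∀ c : ℝ, 0 < c →
      (Function.uncurry fun x y ↦ F x y ^ 2) (q.1, c • q.2) =
        c ^ 2 * (Function.uncurry fun x y ↦ F x y ^ 2) q := by
  filter_upwards [(hF.isOpen.preimage continuous_fst).mem_nhds hx] with q hq c _
  simp only [Function.uncurry, hF.homog q.1 hq, mul_pow, sq_abs]

theorem isUnit_det_fundTensor (hF : IsFinslerMetric U F) (hx : x ∈ U) (hy : y ≠ 0) :
    IsUnit (fundTensor F x y).det :=
  (hF.posDef x hx y hy).det_pos.ne'.isUnit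

theorem solvesSprayEq (hF : IsFinslerMetric U F) (hx : x ∈ U) (hy : y ≠ 0) :
    SolvesSprayEq (Function.uncurry fun x y ↦ F x y ^ 2) x y fun α ↦ 2 * spray F α x y :=
  solvesSprayEq_two_mul_spray (hF.contDiffAt hx hy) (hF.isUnit_det_fundTensor hx hy)

end IsFinslerMetric

namespace IsMinkowskianProduct

variable {m n : ℕ} {U₁ : Set (Fin m → ℝ)} {U₂ : Set (Fin n → ℝ)}
  {F₁ : (Fin m → ℝ) → (Fin m → ℝ) → ℝ} {F₂ : (Fin n → ℝ) → (Fin n → ℝ) → ℝ} {f : ℝ → ℝ → ℝ}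
  {F : (Fin m ⊕ Fin n → ℝ) → (Fin m ⊕ Fin n → ℝ) → ℝ}

theorem sq_eq (hprod : IsMinkowskianProduct U₁ U₂ F₁ F₂ f F) (x y : Fin m ⊕ Fin n → ℝ) :
    F x y ^ 2 = f (F₁ (x ∘ Sum.inl) (y ∘ Sum.inl) ^ 2) (F₂ (x ∘ Sum.inr) (y ∘ Sum.inr) ^ 2) := by
  rw [hprod.F_def, Real.sq_sqrt
    (hprod.f_nonneg _ (Set.mem_Ici.2 (sq_nonneg _)) _ (Set.mem_Ici.2 (sq_nonneg _)))]

theorem contDiffAt_uncurry (hprod : IsMinkowskianProduct U₁ U₂ F₁ F₂ f F) {s t : ℝ}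
    (hs : 0 < s) (ht : 0 < t) : ContDiffAt ℝ 2 (Function.uncurry f) (s, t) :=
  (hprod.f_smooth.contDiffAt ((isOpen_Ioi.prod isOpen_Ioi).mem_nhds
    (Set.mk_mem_prod hs ht))).of_le (WithTop.coe_le_coe.mpr le_top)

end IsMinkowskianProduct

/-- The geodesic spray coefficients of a Minkowskian product Finsler metric split:
`𝔾^i = 𝔾₁^i` on the first block and `𝔾^{i'} = 𝔾₂^{i'}` on the second block. -/
theorem spray_of_minkowskian_product {m n : ℕ}
    (U₁ : Set (Fin m → ℝ)) (U₂ : Set (Fin n → ℝ))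
    (F₁ : (Fin m → ℝ) → (Fin m → ℝ) → ℝ) (F₂ : (Fin n → ℝ) → (Fin n → ℝ) → ℝ)
    (f : ℝ → ℝ → ℝ) (F : (Fin m ⊕ Fin n → ℝ) → (Fin m ⊕ Fin n → ℝ) → ℝ)
    (hprod : IsMinkowskianProduct U₁ U₂ F₁ F₂ f F) :
    ∀ x : Fin m ⊕ Fin n → ℝ, (x ∘ Sum.inl) ∈ U₁ → (x ∘ Sum.inr) ∈ U₂ →
    ∀ y : Fin m ⊕ Fin n → ℝ, (y ∘ Sum.inl) ≠ 0 → (y ∘ Sum.inr) ≠ 0 →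
      (∀ i : Fin m,
        spray F (Sum.inl i) x y = spray F₁ i (x ∘ Sum.inl) (y ∘ Sum.inl)) ∧
      (∀ i' : Fin n,
        spray F (Sum.inr i') x y = spray F₂ i' (x ∘ Sum.inr) (y ∘ Sum.inr)) := by
  intro x hx₁ hx₂ y hy₁ hy₂
  let Λ₁ : (Fin m ⊕ Fin n → ℝ) →L[ℝ] (Fin m → ℝ) :=
    (LinearMap.funLeft ℝ ℝ Sum.inl).toContinuousLinearMap
  let Λ₂ : (Fin m ⊕ Fin n → ℝ) →L[ℝ] (Fin n → ℝ) :=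
    (LinearMap.funLeft ℝ ℝ Sum.inr).toContinuousLinearMap
  have hG : (Function.uncurry fun x y ↦ F x y ^ 2) = fun p ↦ Function.uncurry f
      ((Function.uncurry fun x y ↦ F₁ x y ^ 2) (Λ₁ p.1, Λ₁ p.2),
        (Function.uncurry fun x y ↦ F₂ x y ^ 2) (Λ₂ p.1, Λ₂ p.2)) :=
    funext fun p ↦ hprod.sq_eq p.1 p.2
  have hv : SolvesSprayEq (Function.uncurry fun x y ↦ F x y ^ 2) x y
      (Sum.elim (fun i ↦ 2 * spray F₁ i (x ∘ Sum.inl) (y ∘ Sum.inl))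
        (fun i ↦ 2 * spray F₂ i (x ∘ Sum.inr) (y ∘ Sum.inr))) := by
    rw [hG]
    exact .minkowskianProduct Λ₁ Λ₂
      (hprod.contDiffAt_uncurry (pow_pos (hprod.finsler₁.pos _ hx₁ _ hy₁) 2)
        (pow_pos (hprod.finsler₂.pos _ hx₂ _ hy₂) 2))
      (hprod.finsler₁.contDiffAt hx₁ hy₁) (hprod.finsler₂.contDiffAt hx₂ hy₂)
      (hprod.finsler₁.eventually_homogeneous hx₁) (hprod.finsler₂.eventually_homogeneous hx₂)
      (hprod.finsler₁.solvesSprayEq hx₁ hy₁) (hprod.finsler₂.solvesSprayEq hx₂ hy₂)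
  have hy : y ≠ 0 := by
    rintro rfl
    exact hy₁ rfl
  have h := spray_eq_half_of_solvesSprayEq (hprod.finsler.contDiffAt ⟨hx₁, hx₂⟩ hy)
    (hprod.finsler.isUnit_det_fundTensor ⟨hx₁, hx₂⟩ hy) hv
  exact ⟨fun i ↦ by simp [h], fun i ↦ by simp [h]⟩
end
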